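/- arXiv:1910.11923 — 2 statements merged into one kernel-verified Lean document; each statement's English description precedes it below -/
import Mathlib

section
/- Let x_1,...,x_n be independent {±1}-valued random variables with P(x_j = 1) = p_j, and let the label be y = ∏_{j ∈ I} x_j for a set I of size k. Fix ξ ∈ (0, 1/4) and assume p_j ∈ (ξ, 1/2 − ξ) ∪ (1/2 + ξ, 1 − ξ) for all j. Then for any nonempty subset I' ⊆ I, letting z = ∏_{j ∈ I'} x_j, we have |E[z·y]| − |E[y]| ≥ (2ξ)^k. -/
open MeasureTheory ProbabilityTheory

/-!
Independence turns both expectations into products of the biases `2 p_j - 1`, and since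
`z² = 1` the product `z y` is the parity over `I \ I'`. Every bias has absolute value in
`[2ξ, 1 - 2ξ]`, so with `P = |∏_{I \ I'} (2p_j - 1)|` and `Q = |∏_{I'} (2p_j - 1)|` the
difference is `P (1 - Q) ≥ (2ξ)^{|I \ I'|} (2ξ)^{|I'|}`, because
`Q ≤ 1 - 2ξ ≤ 1 - (2ξ)^{|I'|}` for nonempty `I'`.
-/

namespace Finset

variable {ι : Type*}

theorem prod_mul_prod_eq_prod_sdiff {M : Type*} [CommMonoid M] [DecidableEq ι] {s t : Finset ι}
    {x : ι → M} (hst : s ⊆ t) (hx : ∀ i ∈ s, x i * x i = 1) :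
    (∏ i ∈ s, x i) * ∏ i ∈ t, x i = ∏ i ∈ t \ s, x i := by
  rw [← prod_sdiff hst, mul_left_comm, ← prod_mul_distrib, prod_eq_one hx, mul_one]

variable {s : Finset ι} {a : ι → ℝ} {c : ℝ}

theorem pow_card_le_abs_prod (hc : 0 ≤ c) (ha : ∀ i ∈ s, c ≤ |a i|) :
    c ^ s.card ≤ |∏ i ∈ s, a i| := by
  rw [abs_prod, ← prod_const]
  exact prod_le_prod (fun _ _ => hc) ha

theorem abs_prod_le_pow_card (ha : ∀ i ∈ s, |a i| ≤ c) :
    |∏ i ∈ s, a i| ≤ c ^ s.card := by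
  rw [abs_prod, ← prod_const]
  exact prod_le_prod (fun _ _ => abs_nonneg _) ha

theorem pow_card_add_abs_prod_le_one (hs : s.Nonempty) (hc : 0 ≤ c)
    (ha : ∀ i ∈ s, |a i| ≤ 1 - c) : c ^ s.card + |∏ i ∈ s, a i| ≤ 1 := by
  obtain ⟨i, hi⟩ := hs
  have hc1 : c ≤ 1 := by linarith [ha i hi, abs_nonneg (a i)]
  have hcard : s.card ≠ 0 := card_ne_zero_of_mem hi
  have hcpow : c ^ s.card ≤ c := pow_le_of_le_one hc hc1 hcard
  have hprod : |∏ i ∈ s, a i| ≤ 1 - c :=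
    (abs_prod_le_pow_card ha).trans (pow_le_of_le_one (by linarith) (by linarith) hcard)
  linarith

theorem pow_card_le_abs_prod_sdiff_sub_abs_prod [DecidableEq ι] {t : Finset ι} (hst : s ⊆ t)
    (hs : s.Nonempty) (hc : 0 ≤ c) (ha : ∀ i ∈ t, c ≤ |a i| ∧ |a i| ≤ 1 - c) :
    c ^ t.card ≤ |∏ i ∈ t \ s, a i| - |∏ i ∈ t, a i| := by
  have hP : c ^ (t \ s).card ≤ |∏ i ∈ t \ s, a i| :=
    pow_card_le_abs_prod hc fun i hi => (ha i (sdiff_subset hi)).1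
  have hQ : c ^ s.card ≤ 1 - |∏ i ∈ s, a i| := by
    linarith [pow_card_add_abs_prod_le_one hs hc fun i hi => (ha i (hst hi)).2]
  calc c ^ t.card = c ^ (t \ s).card * c ^ s.card := by
        rw [← pow_add, card_sdiff_add_card_eq_card hst]
    _ ≤ |∏ i ∈ t \ s, a i| * (1 - |∏ i ∈ s, a i|) :=
      mul_le_mul hP hQ (pow_nonneg hc _) (abs_nonneg _)
    _ = |∏ i ∈ t \ s, a i| - |∏ i ∈ t, a i| := by
      rw [← prod_sdiff hst, abs_mul]; ring

end Finset

theorem two_mul_le_abs_two_mul_sub_one {p ξ : ℝ} (hξ : 0 ≤ ξ)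
    (hp : p ∈ Set.Ioo ξ (1/2 - ξ) ∪ Set.Ioo (1/2 + ξ) (1 - ξ)) :
    2 * ξ ≤ |2 * p - 1| ∧ |2 * p - 1| ≤ 1 - 2 * ξ := by
  rcases hp with ⟨h1, h2⟩ | ⟨h1, h2⟩
  · rw [abs_of_nonpos (by linarith)]; constructor <;> linarith
  · rw [abs_of_nonneg (by linarith)]; constructor <;> linarith

section Probability

variable {Ω : Type*} [MeasurableSpace Ω] {μ : Measure Ω}

theorem integral_eq_two_mul_measureReal_sub_one [IsProbabilityMeasure μ] {f : Ω → ℝ}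
    (hf : Measurable f) (hval : ∀ ω, f ω = 1 ∨ f ω = -1) :
    ∫ ω, f ω ∂μ = 2 * μ.real {ω | f ω = 1} - 1 := by
  have hA : MeasurableSet {ω | f ω = 1} := hf (measurableSet_singleton 1)
  have hf_eq : ∀ ω, f ω = 2 * {ω | f ω = 1}.indicator 1 ω - 1 := fun ω => by
    rcases hval ω with h | h <;> norm_num [Set.indicator, h]
  rw [integral_congr_ae (ae_of_all _ hf_eq),
    integral_sub ((integrable_const 1).indicator hA |>.const_mul 2) (integrable_const 1),
    integral_const_mul, integral_indicator_one hA, integral_const, probReal_univ, one_smul]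

theorem ProbabilityTheory.iIndepFun.integral_finset_prod_eq_prod_integral {ι : Type*}
    {X : ι → Ω → ℝ} (hX : iIndepFun X μ) (mX : ∀ i, AEStronglyMeasurable (X i) μ)
    (s : Finset ι) :
    ∫ ω, ∏ i ∈ s, X i ω ∂μ = ∏ i ∈ s, ∫ ω, X i ω ∂μ := by
  rw [← Finset.prod_coe_sort s]
  simp_rw [← Finset.prod_coe_sort s (fun i => X i _)]
  exact (hX.precomp (g := ((↑) : s → ι)) Subtype.val_injective)
    |>.integral_fun_prod_eq_prod_integral fun i => mX i

end Probability

/-- for independent ±1 bits with `P(x_j = 1) = p_j`,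
`p_j ∈ (ξ, 1/2−ξ) ∪ (1/2+ξ, 1−ξ)`, label `y = ∏_{j∈I} x_j` with `|I| = k`, and
any nonempty `I' ⊆ I`, the variable `z = ∏_{j∈I'} x_j` satisfies
`|E[z·y]| − |E[y]| ≥ (2ξ)^k`. -/
theorem stmt2 {Ω : Type*} [MeasurableSpace Ω] (μ : Measure Ω) [IsProbabilityMeasure μ]
    (n k : ℕ) (X : Fin n → Ω → ℝ)
    (hmeas : ∀ j, Measurable (X j))
    (hval : ∀ j ω, X j ω = 1 ∨ X j ω = -1)
    (hind : iIndepFun X μ)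
    (p : Fin n → ℝ) (hp : ∀ j, μ {ω | X j ω = 1} = ENNReal.ofReal (p j))
    (ξ : ℝ) (hξ : ξ ∈ Set.Ioo (0 : ℝ) (1/4))
    (hpr : ∀ j, p j ∈ Set.Ioo ξ (1/2 - ξ) ∪ Set.Ioo (1/2 + ξ) (1 - ξ))
    (I : Finset (Fin n)) (hk : I.card = k)
    (I' : Finset (Fin n)) (hI' : I' ⊆ I) (hne : I'.Nonempty) :
    |∫ ω, (∏ j ∈ I', X j ω) * (∏ j ∈ I, X j ω) ∂μ| -
      |∫ ω, (∏ j ∈ I, X j ω) ∂μ| ≥ (2*ξ)^k := by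
  have hξ0 : 0 ≤ ξ := hξ.1.le
  have hmean : ∀ j, ∫ ω, X j ω ∂μ = 2 * p j - 1 := fun j => by
    have hp0 : 0 ≤ p j := by rcases hpr j with ⟨h, -⟩ | ⟨h, -⟩ <;> linarith
    rw [integral_eq_two_mul_measureReal_sub_one (hmeas j) (hval j), measureReal_def, hp j,
      ENNReal.toReal_ofReal hp0]
  have hexp (s : Finset (Fin n)) :
      ∫ ω, ∏ j ∈ s, X j ω ∂μ = ∏ j ∈ s, (2 * p j - 1) := by
    rw [hind.integral_finset_prod_eq_prod_integral (fun j => (hmeas j).aestronglyMeasurable),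
      Finset.prod_congr rfl fun j _ => hmean j]
  have hzy (ω : Ω) : (∏ j ∈ I', X j ω) * ∏ j ∈ I, X j ω = ∏ j ∈ I \ I', X j ω :=
    Finset.prod_mul_prod_eq_prod_sdiff hI' fun j _ => by
      rcases hval j ω with h | h <;> simp [h]
  simp_rw [hzy, hexp, ← hk]
  exact Finset.pow_card_le_abs_prod_sdiff_sub_abs_prod hI' hne (by linarith)
    fun j _ => two_mul_le_abs_two_mul_sub_one hξ0 (hpr j)
end

section
/- Consider the generative distributions D^(0),...,D^(d) defined for a tree circuit with gates in {AND, OR, NAND, NOR}: D^(0) is uniform on {((1,1),1), ((−1,−1),−1)} identifying the single bit with the label; and D^(i) is obtained from D^(i−1) by replacing each bit z_j with a uniformly random pattern in {±1}^2 from the set of patterns mapped to z_j by gate γ_{i,j}. Then for every layer i and coordinate j, the conditional probabilities p⁺ = P(x_j = 1 | y = 1) and p⁻ = P(x_j = 1 | y = −1) under D^(i) satisfy |p⁺ − p⁻| = (2/3)^i. -/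
/-- The allowed gate types for the generative model: AND, OR, NAND, NOR. -/
inductive BGate | and | or | nand | nor

/-- Evaluation of a gate on ±1-encoded booleans (1 = true, −1 = false). -/
def BGate.eval : BGate → ℤ → ℤ → ℤ
  | .and,  a, b => if a = 1 ∧ b = 1 then 1 else -1
  | .or,   a, b => if a = 1 ∨ b = 1 then 1 else -1
  | .nand, a, b => if a = 1 ∧ b = 1 then -1 else 1
  | .nor,  a, b => if a = 1 ∨ b = 1 then -1 else 1

/-- ±1 encoding of a boolean. -/
def pm (b : Bool) : ℤ := if b then 1 else -1

/-- Number of input patterns in {±1}² on which gate `g` outputs `c`. -/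
def BGate.patCount (g : BGate) (c : ℤ) : ℕ :=
  (Finset.univ.filter (fun p : Bool × Bool => g.eval (pm p.1) (pm p.2) = c)).card

/-- The values of the previous (coarser) layer determined by a configuration `x`
of layer `i+1`: bit `j` is the gate `γ j` applied to the pair `(x_{2j}, x_{2j+1})`. -/
def prevLayer (i : ℕ) (γ : ℕ → BGate) (x : Fin (2^(i+1)) → ℤ) (j : Fin (2^i)) : ℤ :=
  (γ j).eval (x ⟨2*j.1, by have h := j.2; rw [pow_succ]; omega⟩)
             (x ⟨2*j.1+1, by have h := j.2; rw [pow_succ]; omega⟩)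

/-- Probability mass function of the generative distribution `D^(i)` on
configurations of layer `i` together with the label: `D^(0)` identifies the
single bit with a uniform ±1 label, and `D^(i+1)` is obtained from `D^(i)` by
replacing each bit `z_j` with a uniformly random pattern in {±1}² among those on
which gate `γ i j` outputs `z_j`. -/
noncomputable def genMass (γ : ℕ → ℕ → BGate) : (i : ℕ) → (Fin (2^i) → ℤ) → ℤ → ℝ
  | 0 => fun x y => if x ⟨0, by norm_num⟩ = y ∧ (y = 1 ∨ y = -1) then 1/2 else 0
  | (i+1) => fun x y =>
      if ∀ j, x j = 1 ∨ x j = -1 then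
        genMass γ i (prevLayer i (γ i) x) y *
          ∏ j : Fin (2^i), ((((γ i j).patCount (prevLayer i (γ i) x j) : ℝ)))⁻¹
      else 0

/-- Probability of an event under the generative distribution `D^(i)`. -/
noncomputable def genPr (γ : ℕ → ℕ → BGate) (i : ℕ)
    (E : (Fin (2^i) → ℤ) → ℤ → Prop) [∀ x y, Decidable (E x y)] : ℝ :=
  ∑ s : Fin (2^i) → Bool, ∑ b : Bool,
    if E (fun j => pm (s j)) (pm b) then genMass γ i (fun j => pm (s j)) (pm b) else 0

/-- Expectation of `f(x, y)` under the generative distribution `D^(i)`. -/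
noncomputable def genE (γ : ℕ → ℕ → BGate) (i : ℕ)
    (f : (Fin (2^i) → ℤ) → ℤ → ℝ) : ℝ :=
  ∑ s : Fin (2^i) → Bool, ∑ b : Bool,
    f (fun j => pm (s j)) (pm b) * genMass γ i (fun j => pm (s j)) (pm b)

/-!
Given the previous layer, the input patterns of the gates are independent, the pattern of
gate `q` being uniform on the patterns mapped to its output. Summing out every gate but `q`
gives `P(x_k = 1 ∧ y = c) = ρ₊ P(z_q = 1 ∧ y = c) + ρ₋ P(z_q = -1 ∧ y = c)` for an input `k`
of gate `q`, where `ρ±` is the chance that this input is `1` given output `±1`. The label stays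
uniform, so the conditional probability of `x_k = 1` given `y = c` is an affine function of that
of `z_q = 1`, with slope `ρ₊ - ρ₋`; for each of AND, OR, NAND, NOR this slope is `±2/3`.
-/

lemma pm_injective : Function.Injective pm := by
  intro a b; cases a <;> cases b <;> decide

@[simp] lemma pm_true : pm true = 1 := rfl
@[simp] lemma pm_false : pm false = -1 := rfl
@[simp] lemma pm_eq_one_iff (b : Bool) : pm b = 1 ↔ b = true := by cases b <;> decide

namespace BGate

def evalB (g : BGate) (a b : Bool) : Bool := g.eval (pm a) (pm b) = 1

lemma pm_evalB (g : BGate) (a b : Bool) : pm (g.evalB a b) = g.eval (pm a) (pm b) := by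
  cases g <;> cases a <;> cases b <;> decide

lemma patCount_pm_pos (g : BGate) (u : Bool) : 0 < g.patCount (pm u) := by
  cases g <;> cases u <;> decide

noncomputable def kernel (g : BGate) (u : ℤ) (p : Fin 2 → Bool) : ℝ :=
  if g.eval (pm (p 0)) (pm (p 1)) = u then (g.patCount u : ℝ)⁻¹ else 0

lemma sum_kernel (g : BGate) (u : Bool) : ∑ p, g.kernel (pm u) p = 1 := by
  have hcount : ∑ p : Fin 2 → Bool, (if g.eval (pm (p 0)) (pm (p 1)) = pm u then (1 : ℝ) else 0)
      = g.patCount (pm u) := by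
    rw [BGate.patCount, Finset.natCast_card_filter]
    exact Fintype.sum_equiv (finTwoArrowEquiv Bool) _ _ (fun _ => rfl)
  calc ∑ p, g.kernel (pm u) p
      = (∑ p : Fin 2 → Bool, if g.eval (pm (p 0)) (pm (p 1)) = pm u then (1 : ℝ) else 0) *
          (g.patCount (pm u) : ℝ)⁻¹ := by
        rw [Finset.sum_mul]; simp only [kernel, ite_mul, one_mul, zero_mul]
    _ = 1 := by rw [hcount]; exact mul_inv_cancel₀ (Nat.cast_ne_zero.mpr (patCount_pm_pos g u).ne')

noncomputable def childProb (g : BGate) (r : Fin 2) (u : ℤ) : ℝ :=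
  ∑ p, (if p r = true then 1 else 0) * g.kernel u p

lemma abs_childProb_sub (g : BGate) (r : Fin 2) :
    |g.childProb r 1 - g.childProb r (-1)| = 2 / 3 := by
  have sum_fin_two_arrow : ∀ f : (Fin 2 → Bool) → ℝ, ∑ p, f p = ∑ a : Bool, ∑ b : Bool, f ![a, b] :=
    fun f => by
      rw [← Fintype.sum_prod_type']
      exact Fintype.sum_equiv (finTwoArrowEquiv Bool) _ _ fun p => by
        congr 1; ext k; fin_cases k <;> rfl
  obtain ⟨h₁, h₂, h₃, h₄, h₅, h₆, h₇, h₈⟩ :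
      and.patCount 1 = 1 ∧ and.patCount (-1) = 3 ∧ or.patCount 1 = 3 ∧ or.patCount (-1) = 1 ∧
      nand.patCount 1 = 3 ∧ nand.patCount (-1) = 1 ∧ nor.patCount 1 = 1 ∧
      nor.patCount (-1) = 3 := by decide
  cases g <;> fin_cases r <;>
    simp [childProb, kernel, sum_fin_two_arrow, BGate.eval, pm, h₁, h₂, h₃, h₄, h₅, h₆, h₇, h₈] <;>
    norm_num

end BGate

lemma Fintype.sum_mul_prod_of_sum_eq_one {ι α R : Type*} [Fintype ι] [DecidableEq ι] [Fintype α]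
    [CommSemiring R] (κ : ι → α → R) (hκ : ∀ j, ∑ a, κ j a = 1) (φ : α → R) (q : ι) :
    ∑ t : ι → α, φ (t q) * ∏ j, κ j (t j) = ∑ a, φ a * κ q a := by
  calc ∑ t : ι → α, φ (t q) * ∏ j, κ j (t j)
      = ∑ t : ι → α, ∏ j, (if j = q then φ (t j) else 1) * κ j (t j) := by
        simp only [Finset.prod_mul_distrib, Fintype.prod_ite_eq']
    _ = ∏ j, ∑ a, (if j = q then φ a else 1) * κ j a :=
        (Fintype.prod_sum fun j a => (if j = q then φ a else 1) * κ j a).symm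
    _ = ∏ j, if j = q then ∑ a, φ a * κ q a else 1 := by
        refine Finset.prod_congr rfl fun j _ => ?_
        split_ifs with h
        · subst h; simp
        · simp [hκ]
    _ = ∑ a, φ a * κ q a := Fintype.prod_ite_eq' q _

/-- Coordinate `finProdFinEquiv (q, r)` of layer `i+1` is input `r` of gate `q` of layer `i`. -/
def childPairs (i : ℕ) : (Fin (2^(i+1)) → Bool) ≃ (Fin (2^i) → Fin 2 → Bool) :=
  (finProdFinEquiv.symm.arrowCongr (Equiv.refl Bool)).trans (Equiv.curry _ _ _)

@[simp]
lemma childPairs_symm_apply (i : ℕ) (t : Fin (2^i) → Fin 2 → Bool) (q : Fin (2^i)) (r : Fin 2) :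
    (childPairs i).symm t (finProdFinEquiv (q, r)) = t q r := by
  show Function.uncurry t (finProdFinEquiv.symm (finProdFinEquiv (q, r))) = t q r
  simp

lemma prevLayer_childPairs_symm (i : ℕ) (g : ℕ → BGate) (t : Fin (2^i) → Fin 2 → Bool)
    (q : Fin (2^i)) :
    prevLayer i g (fun k => pm ((childPairs i).symm t k)) q = pm ((g q).evalB (t q 0) (t q 1)) := by
  rw [BGate.pm_evalB, ← childPairs_symm_apply i t q 0, ← childPairs_symm_apply i t q 1, prevLayer]
  congr <;> refine congrArg _ (Fin.ext ?_) <;> simp [mul_comm, add_comm]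

section Layers

variable (γ : ℕ → ℕ → BGate)

lemma genMass_succ_childPairs_symm (i : ℕ) (t : Fin (2^i) → Fin 2 → Bool) (y : ℤ) :
    genMass γ (i+1) (fun k => pm ((childPairs i).symm t k)) y =
      ∑ u : Fin (2^i) → Bool, genMass γ i (fun q => pm (u q)) y *
        ∏ q : Fin (2^i), (γ i q).kernel (pm (u q)) (t q) := by
  set out : Fin (2^i) → Bool := fun q => (γ i q).evalB (t q 0) (t q 1)
  have hout : ∀ q : Fin (2^i), (γ i q).eval (pm (t q 0)) (pm (t q 1)) = pm (out q) :=
    fun q => (BGate.pm_evalB _ _ _).symm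
  have hprev : prevLayer i (γ i) (fun k => pm ((childPairs i).symm t k)) = fun q => pm (out q) :=
    funext (prevLayer_childPairs_symm i (γ i) t)
  simp only [genMass]
  -- the product of kernels vanishes unless `u` is the vector `out` of gate outputs
  rw [if_pos fun k => by cases (childPairs i).symm t k <;> simp [pm], hprev,
    Fintype.sum_eq_single out]
  · simp [BGate.kernel, hout]
  · intro u hu
    obtain ⟨q, hq⟩ := Function.ne_iff.mp hu
    refine mul_eq_zero_of_right _ (Finset.prod_eq_zero (Finset.mem_univ q) ?_)
    simp [BGate.kernel, hout, pm_injective.ne hq.symm]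

lemma genE_succ (i : ℕ) (q : Fin (2^i)) (F : (Fin 2 → ℤ) → ℤ → ℝ) :
    genE γ (i+1) (fun x y => F (fun r => x (finProdFinEquiv (q, r))) y) =
      genE γ i (fun z y => ∑ p, F (fun r => pm (p r)) y * (γ i q).kernel (z q) p) := by
  have hmarg : ∀ (u : Fin (2^i) → Bool) (b : Bool),
      ∑ t : Fin (2^i) → Fin 2 → Bool, F (fun r => pm (t q r)) (pm b) *
          ∏ q' : Fin (2^i), (γ i q').kernel (pm (u q')) (t q') =
        ∑ p, F (fun r => pm (p r)) (pm b) * (γ i q).kernel (pm (u q)) p :=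
    fun u b => Fintype.sum_mul_prod_of_sum_eq_one _
      (fun j : Fin (2^i) => (γ i j).sum_kernel (u j))
      (fun p => F (fun r => pm (p r)) (pm b)) q
  calc genE γ (i+1) (fun x y => F (fun r => x (finProdFinEquiv (q, r))) y)
      = ∑ t : Fin (2^i) → Fin 2 → Bool, ∑ b : Bool, F (fun r => pm (t q r)) (pm b) *
          genMass γ (i+1) (fun k => pm ((childPairs i).symm t k)) (pm b) := by
        rw [genE, ← (childPairs i).symm.sum_comp]
        simp only [childPairs_symm_apply]
    _ = ∑ b : Bool, ∑ u : Fin (2^i) → Bool, genMass γ i (fun q => pm (u q)) (pm b) *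
          ∑ t : Fin (2^i) → Fin 2 → Bool, F (fun r => pm (t q r)) (pm b) *
            ∏ q' : Fin (2^i), (γ i q').kernel (pm (u q')) (t q') := by
        simp only [genMass_succ_childPairs_symm, Finset.mul_sum]
        rw [Finset.sum_comm]
        refine Finset.sum_congr rfl fun b _ => ?_
        rw [Finset.sum_comm]
        simp only [mul_left_comm]
    _ = _ := by
        rw [Finset.sum_comm]
        simp only [hmarg, genE, mul_comm]

lemma genPr_eq_genE (i : ℕ) (E : (Fin (2^i) → ℤ) → ℤ → Prop) [∀ x y, Decidable (E x y)] :
    genPr γ i E = genE γ i (fun x y => if E x y then 1 else 0) := by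
  simp only [genPr, genE, ite_mul, one_mul, zero_mul]

lemma genPr_zero (E : (Fin (2^0) → ℤ) → ℤ → Prop) [∀ x y, Decidable (E x y)] :
    genPr γ 0 E =
      (if E (fun _ => 1) 1 then 1/2 else 0) + (if E (fun _ => -1) (-1) then 1/2 else 0) := by
  rw [genPr, ← (@Equiv.funUnique (Fin (2^0)) Bool (inferInstanceAs (Unique (Fin 1)))).symm.sum_comp]
  simp [genMass, pm]

lemma genPr_coord_add_genPr_coord_neg (i : ℕ) (q : Fin (2^i)) (c : ℤ) :
    genPr γ i (fun x y => x q = 1 ∧ y = c) + genPr γ i (fun x y => x q = -1 ∧ y = c) =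
      genPr γ i (fun _ y => y = c) := by
  simp only [genPr, ← Finset.sum_add_distrib]
  refine Finset.sum_congr rfl fun s _ => Finset.sum_congr rfl fun b _ => ?_
  obtain h | h := Bool.eq_false_or_eq_true (s q) <;> simp [h]

lemma genPr_label_succ (i : ℕ) (c : ℤ) :
    genPr γ (i+1) (fun _ y => y = c) = genPr γ i (fun _ y => y = c) := by
  rw [genPr_eq_genE, genPr_eq_genE]
  refine (genE_succ γ i ⟨0, by positivity⟩ fun _ y => if y = c then 1 else 0).trans ?_
  simp only [genE, ← Finset.mul_sum, BGate.sum_kernel, mul_one]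

lemma genPr_label (i : ℕ) {c : ℤ} (hc : c = 1 ∨ c = -1) : genPr γ i (fun _ y => y = c) = 1/2 := by
  induction i with
  | zero => rcases hc with rfl | rfl <;> norm_num [genPr_zero]
  | succ i ih => rw [genPr_label_succ, ih]

lemma genPr_child_succ (i : ℕ) (q : Fin (2^i)) (r : Fin 2) (c : ℤ) :
    genPr γ (i+1) (fun x y => x (finProdFinEquiv (q, r)) = 1 ∧ y = c) =
      (γ i q).childProb r 1 * genPr γ i (fun z y => z q = 1 ∧ y = c) +
        (γ i q).childProb r (-1) * genPr γ i (fun z y => z q = -1 ∧ y = c) := by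
  rw [genPr_eq_genE, genPr_eq_genE, genPr_eq_genE]
  refine (genE_succ γ i q fun p y => if p r = 1 ∧ y = c then 1 else 0).trans ?_
  simp only [genE, Finset.mul_sum, ← Finset.sum_add_distrib]
  refine Finset.sum_congr rfl fun s _ => Finset.sum_congr rfl fun b _ => ?_
  obtain h | h := Bool.eq_false_or_eq_true (s q) <;> by_cases hb : pm b = c <;>
    simp [h, hb, BGate.childProb]

lemma condProb_child_succ (i : ℕ) (q : Fin (2^i)) (r : Fin 2) {c : ℤ}
    (hc : c = 1 ∨ c = -1) :
    genPr γ (i+1) (fun x y => x (finProdFinEquiv (q, r)) = 1 ∧ y = c) /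
        genPr γ (i+1) (fun _ y => y = c) =
      (γ i q).childProb r (-1) + ((γ i q).childProb r 1 - (γ i q).childProb r (-1)) *
        (genPr γ i (fun z y => z q = 1 ∧ y = c) / genPr γ i (fun _ y => y = c)) := by
  have hneg : genPr γ i (fun z y => z q = -1 ∧ y = c) =
      1/2 - genPr γ i (fun z y => z q = 1 ∧ y = c) := by
    linarith [genPr_coord_add_genPr_coord_neg γ i q c, genPr_label γ i hc]
  rw [genPr_child_succ, genPr_label_succ, genPr_label γ i hc, hneg]
  ring

end Layers

/-- under `D^(i)`, for every coordinate `j`, the conditional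
probabilities `p⁺ = P(x_j = 1 | y = 1)` and `p⁻ = P(x_j = 1 | y = −1)` satisfy
`|p⁺ − p⁻| = (2/3)^i`. -/
theorem stmt6 (γ : ℕ → ℕ → BGate) (i : ℕ) (j : Fin (2^i)) :
    |genPr γ i (fun x y => x j = 1 ∧ y = 1) / genPr γ i (fun _ y => y = 1) -
     genPr γ i (fun x y => x j = 1 ∧ y = -1) / genPr γ i (fun _ y => y = -1)|
      = (2/3 : ℝ)^i := by
  induction i with
  | zero => norm_num [genPr_zero]
  | succ i ih =>
    obtain ⟨⟨q, r⟩, rfl⟩ := (finProdFinEquiv (m := 2^i) (n := 2)).surjective j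
    rw [condProb_child_succ γ i q r (Or.inl rfl), condProb_child_succ γ i q r (Or.inr rfl),
      add_sub_add_left_eq_sub, ← mul_sub, abs_mul, BGate.abs_childProb_sub, ih q, pow_succ,
      mul_comm]
end
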